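/- arXiv:1602.00703 — 3 statements merged into one kernel-verified Lean document; each statement's English description precedes it below -/
import Mathlib

section
/- Let H be a Hermitian positive semidefinite d×d complex matrix, Δ > 0, and v a unit vector in ℂ^d such that H v = 0 and ⟨w, H w⟩ ≥ Δ‖w‖² for every vector w orthogonal to v; write ‖H‖ for the operator norm of H and assume ‖H‖ ≥ Δ. Let F_T < 1 and ε > 0, and set δ = (1 − F_T)(1 − Δ/‖H‖) + 2εΔ/‖H‖. Let ρ be a density matrix on ℂ^d with fidelity F = ⟨v, ρ v⟩ satisfying F ≥ F_T + δ. Then the fidelity lower bound F_min = 1 − Tr[Hρ]/Δ satisfies F_min ≥ F_T + 2ε. (Deterministic completeness of the certification protocol.) -/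
open Matrix
open scoped ComplexOrder

/-!
Since `H` is Hermitian and kills `v`, it is compressed by `Q = 1 - v v*`: `H = Q H Q`. Hence
`Tr[Hρ] = Tr[H · QρQ] ≤ ‖H‖ Tr[QρQ] = ‖H‖ (1 - F)`, the inequality holding for every positive
semidefinite matrix in place of `QρQ`. The hypothesis `F ≥ F_T + δ` says precisely that
`‖H‖ (1 - F) ≤ (1 - F_T - 2ε) Δ`.
-/

/-- The operator norm (largest singular value) of a complex matrix. -/
noncomputable def opNorm {d : ℕ} (A : Matrix (Fin d) (Fin d) ℂ) : ℝ :=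
  ‖Matrix.toEuclideanCLM (𝕜 := ℂ) A‖

namespace Matrix

theorem trace_vecMulVec_mul {n R : Type*} [Fintype n] [CommSemiring R] (v w : n → R)
    (A : Matrix n n R) : (vecMulVec v w * A).trace = w ⬝ᵥ A *ᵥ v := by
  rw [vecMulVec_mul, trace_vecMulVec, dotProduct_comm, dotProduct_mulVec]

theorem isIdempotentElem_vecMulVec_star {n 𝕜 : Type*} [Fintype n] [RCLike 𝕜] {v : n → 𝕜}
    (hv : star v ⬝ᵥ v = 1) : IsIdempotentElem (vecMulVec v (star v)) := by
  rw [IsIdempotentElem, vecMulVec_mul_vecMulVec, hv, one_smul]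

end Matrix

section OpNorm

variable {d : ℕ}

theorem re_dotProduct_mulVec_le_opNorm_mul (H : Matrix (Fin d) (Fin d) ℂ) (x : Fin d → ℂ) :
    (star x ⬝ᵥ H *ᵥ x).re ≤ opNorm H * (star x ⬝ᵥ x).re := by
  set x' := WithLp.toLp 2 x
  have hquad : star x ⬝ᵥ H *ᵥ x = inner ℂ x' (toEuclideanCLM (𝕜 := ℂ) H x') :=
    dotProduct_comm _ _
  have hnorm : (star x ⬝ᵥ x).re = ‖x'‖ ^ 2 := by
    rw [dotProduct_comm]; exact inner_self_eq_norm_sq (𝕜 := ℂ) x'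
  calc (star x ⬝ᵥ H *ᵥ x).re ≤ ‖x'‖ * ‖toEuclideanCLM (𝕜 := ℂ) H x'‖ := by
        rw [hquad]; exact re_inner_le_norm (𝕜 := ℂ) _ _
    _ ≤ ‖x'‖ * (opNorm H * ‖x'‖) := by gcongr; exact ContinuousLinearMap.le_opNorm _ _
    _ = opNorm H * (star x ⬝ᵥ x).re := by rw [hnorm]; ring

theorem re_trace_mul_le_opNorm_mul (H : Matrix (Fin d) (Fin d) ℂ)
    {σ : Matrix (Fin d) (Fin d) ℂ} (hσ : σ.PosSemidef) :
    (H * σ).trace.re ≤ opNorm H * σ.trace.re := by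
  obtain ⟨m, u, rfl⟩ := posSemidef_iff_eq_sum_vecMulVec.mp hσ
  simp only [Finset.mul_sum, trace_sum, mul_vecMulVec, trace_vecMulVec, Complex.re_sum]
  refine Finset.sum_le_sum fun i _ => ?_
  rw [dotProduct_comm, dotProduct_comm (u i)]
  exact re_dotProduct_mulVec_le_opNorm_mul H (u i)

theorem re_trace_mul_le_opNorm_mul_trace_one_sub {H P ρ : Matrix (Fin d) (Fin d) ℂ}
    (hH : H.IsHermitian) (hP : P.IsHermitian) (hPP : IsIdempotentElem P) (hHP : H * P = 0)
    (hρ : ρ.PosSemidef) : (H * ρ).trace.re ≤ opNorm H * ((1 - P) * ρ).trace.re := by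
  set Q := 1 - P
  have hQ : Qᴴ = Q := (isHermitian_one.sub hP).eq
  have hPH : P * H = 0 := by
    simpa [hP.eq, hH.eq] using congrArg conjTranspose hHP
  have hQHQ : Q * H * Q = H := by
    simp [Q, sub_mul, mul_sub, hHP, hPH]
  have hσ : (Q * ρ * Q).PosSemidef := by
    simpa only [hQ] using hρ.mul_mul_conjTranspose_same Q
  calc (H * ρ).trace.re = (H * (Q * ρ * Q)).trace.re := by
        rw [← Matrix.mul_assoc, ← Matrix.mul_assoc, trace_mul_comm (H * Q * ρ),
          ← Matrix.mul_assoc, ← Matrix.mul_assoc, hQHQ]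
    _ ≤ opNorm H * (Q * ρ * Q).trace.re := re_trace_mul_le_opNorm_mul H hσ
    _ = opNorm H * (Q * ρ).trace.re := by
        rw [trace_mul_cycle, hPP.one_sub.eq]

end OpNorm

theorem certification_completeness_general {d : ℕ} (H : Matrix (Fin d) (Fin d) ℂ)
    (hH : H.PosSemidef) (Δ : ℝ) (hΔ : 0 < Δ) (v : Fin d → ℂ)
    (hv : star v ⬝ᵥ v = 1) (hground : H *ᵥ v = 0)
    (hnorm : Δ ≤ opNorm H)
    (F_T ε : ℝ)
    (ρ : Matrix (Fin d) (Fin d) ℂ) (hρ : ρ.PosSemidef) (hρtr : ρ.trace = 1)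
    (hF : (star v ⬝ᵥ (ρ *ᵥ v)).re ≥
      F_T + ((1 - F_T) * (1 - Δ / opNorm H) + 2 * ε * Δ / opNorm H)) :
    1 - ((H * ρ).trace).re / Δ ≥ F_T + 2 * ε := by
  have hN : 0 < opNorm H := hΔ.trans_le hnorm
  have hbound := re_trace_mul_le_opNorm_mul_trace_one_sub hH.isHermitian
    (posSemidef_vecMulVec_self_star v).isHermitian (isIdempotentElem_vecMulVec_star hv)
    (by rw [mul_vecMulVec, hground, zero_vecMulVec]) hρ
  rw [Matrix.sub_mul, Matrix.one_mul, trace_sub, hρtr, trace_vecMulVec_mul, Complex.sub_re,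
    Complex.one_re] at hbound
  have hexcited : opNorm H * (1 - (star v ⬝ᵥ ρ *ᵥ v).re) ≤ (1 - F_T - 2 * ε) * Δ := by
    have := mul_le_mul_of_nonneg_left hF hN.le
    field_simp at this
    linarith
  rw [ge_iff_le, le_sub_comm, div_le_iff₀ hΔ]
  linarith

/-- Deterministic completeness of the certification protocol. If the
fidelity `F = ⟨v, ρ v⟩` of the density matrix `ρ` with the unique ground state `v` of
the PSD Hamiltonian `H` (gap `≥ Δ`, `‖H‖ ≥ Δ`) satisfies `F ≥ F_T + δ` with
`δ = (1 - F_T)(1 - Δ/‖H‖) + 2εΔ/‖H‖`, then `F_min = 1 - Tr[Hρ]/Δ ≥ F_T + 2ε`. -/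
theorem certification_completeness {d : ℕ} (H : Matrix (Fin d) (Fin d) ℂ)
    (hH : H.PosSemidef) (Δ : ℝ) (hΔ : 0 < Δ) (v : Fin d → ℂ)
    (hv : star v ⬝ᵥ v = 1) (hground : H *ᵥ v = 0)
    (hgap : ∀ w : Fin d → ℂ, star v ⬝ᵥ w = 0 →
      Δ * (star w ⬝ᵥ w).re ≤ (star w ⬝ᵥ (H *ᵥ w)).re)
    (hnorm : Δ ≤ opNorm H)
    (F_T ε : ℝ) (hFT : F_T < 1) (hε : 0 < ε)
    (ρ : Matrix (Fin d) (Fin d) ℂ) (hρ : ρ.PosSemidef) (hρtr : ρ.trace = 1)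
    (hF : (star v ⬝ᵥ (ρ *ᵥ v)).re ≥
      F_T + ((1 - F_T) * (1 - Δ / opNorm H) + 2 * ε * Δ / opNorm H)) :
    1 - ((H * ρ).trace).re / Δ ≥ F_T + 2 * ε :=
  certification_completeness_general H hH Δ hΔ v hv hground hnorm F_T ε ρ hρ hρtr hF
end

section
/- Let H be a Hermitian positive semidefinite d×d complex matrix, Δ > 0, and v a unit vector in ℂ^d such that H v = 0 and ⟨w, H w⟩ ≥ Δ‖w‖² for every vector w orthogonal to v; write ‖H‖ for the operator norm of H and assume ‖H‖ ≥ Δ. Fix a threshold fidelity F_T < 1, an estimation error ε > 0 and a failure probability α ∈ (0,1); set δ = (1 − F_T)(1 − Δ/‖H‖) + 2εΔ/‖H‖. Let ρ be a density matrix on ℂ^d with fidelity F = ⟨v, ρ v⟩, let F_min = 1 − Tr[Hρ]/Δ, and let F* : Ω → ℝ be a random variable on a probability space (Ω, P) satisfying P[|F* − F_min| ≤ ε] ≥ 1 − α. If F ≥ F_T + δ, then P[F* ≥ F_T + ε] ≥ 1 − α, i.e., the test that accepts when F* ≥ F_T + ε accepts ρ with probability at least 1 − α. -/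
open Matrix MeasureTheory
open scoped ComplexOrder

/-!
Since `H v = 0` and `H` is Hermitian, conjugating `H ≤ ‖H‖ • 1` by the projection
`1 - v v*` onto `v⊥` (which leaves `H` unchanged) gives `H ≤ ‖H‖ (1 - v v*)` in the Loewner
order, hence `Tr[Hρ] ≤ ‖H‖ (1 - F)`. Under `F ≥ F_T + δ` this forces `F_min ≥ F_T + 2ε`, so
on the event `|F* - F_min| ≤ ε` the test accepts.
-/

open scoped MatrixOrder Matrix.Norms.L2Operator

namespace Matrix

variable {n 𝕜 : Type*} [Fintype n] [DecidableEq n] [RCLike 𝕜]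

lemma PosSemidef.trace_mul_nonneg {A B : Matrix n n 𝕜} (hA : A.PosSemidef) (hB : B.PosSemidef) :
    0 ≤ (A * B).trace := by
  obtain ⟨C, rfl⟩ := CStarAlgebra.nonneg_iff_eq_star_mul_self.mp hB.nonneg
  rw [← Matrix.mul_assoc, trace_mul_comm, ← Matrix.mul_assoc]
  exact (hA.mul_mul_conjTranspose_same C).trace_nonneg

lemma trace_mul_mono {A B ρ : Matrix n n 𝕜} (hAB : A ≤ B) (hρ : ρ.PosSemidef) :
    (A * ρ).trace ≤ (B * ρ).trace := by
  rw [← sub_nonneg, ← trace_sub, ← Matrix.sub_mul]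
  exact hAB.trace_mul_nonneg hρ

lemma le_norm_smul_one_sub_vecMulVec {A : Matrix n n ℂ} (hA : A.IsHermitian) {v : n → ℂ}
    (hv : star v ⬝ᵥ v = 1) (hAv : A *ᵥ v = 0) :
    A ≤ ‖A‖ • (1 - vecMulVec v (star v)) := by
  set Q := 1 - vecMulVec v (star v)
  have hQ : star Q = Q := by simp [Q, star_eq_conjTranspose, conjTranspose_vecMulVec]
  have hQQ : Q * Q = Q := by
    simp [Q, sub_mul, mul_sub, vecMulVec_mul_vecMulVec, hv]
  have hAQ : A * Q = A := by simp [Q, mul_sub, mul_vecMulVec, hAv]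
  have hQA : Q * A = A := by
    have : star v ᵥ* A = 0 := by rw [← hA.eq, ← star_mulVec, hAv, star_zero]
    simp [Q, sub_mul, vecMulVec_mul, this]
  have := star_left_conjugate_le_conjugate hA.isSelfAdjoint.le_algebraMap_norm_self Q
  rwa [hQ, Matrix.mul_assoc, hAQ, hQA, Algebra.algebraMap_eq_smul_one, Matrix.mul_smul,
    Matrix.mul_one, Matrix.smul_mul, hQQ] at this

lemma IsHermitian.re_trace_mul_le_norm_mul_one_sub {A ρ : Matrix n n ℂ} (hA : A.IsHermitian)
    {v : n → ℂ} (hv : star v ⬝ᵥ v = 1) (hAv : A *ᵥ v = 0) (hρ : ρ.PosSemidef)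
    (hρtr : ρ.trace = 1) :
    ((A * ρ).trace).re ≤ ‖A‖ * (1 - (star v ⬝ᵥ (ρ *ᵥ v)).re) := by
  have h := trace_mul_mono (le_norm_smul_one_sub_vecMulVec hA hv hAv) hρ
  have hP : (vecMulVec v (star v) * ρ).trace = star v ⬝ᵥ (ρ *ᵥ v) := by
    rw [vecMulVec_mul, trace_vecMulVec, dotProduct_comm, ← dotProduct_mulVec]
  rw [Matrix.smul_mul, trace_smul, Matrix.sub_mul, Matrix.one_mul, trace_sub, hρtr, hP] at h
  simpa using (Complex.le_def.mp h).1

end Matrix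

lemma add_two_mul_le_one_sub_div {F F_T ε Δ K E : ℝ} (hΔ : 0 < Δ) (hK : 0 < K)
    (hE : E ≤ K * (1 - F))
    (hF : F ≥ F_T + ((1 - F_T) * (1 - Δ / K) + 2 * ε * Δ / K)) :
    F_T + 2 * ε ≤ 1 - E / Δ := by
  have hKF : K * (1 - F) ≤ Δ * (1 - F_T - 2 * ε) := by
    have := mul_le_mul_of_nonneg_left hF hK.le
    field_simp at this
    linarith
  rw [le_sub_comm, div_le_iff₀ hΔ]
  linarith

theorem certification_completeness_prob_general {d : ℕ} (H : Matrix (Fin d) (Fin d) ℂ)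
    (hH : H.PosSemidef) (Δ : ℝ) (hΔ : 0 < Δ) (v : Fin d → ℂ)
    (hv : star v ⬝ᵥ v = 1) (hground : H *ᵥ v = 0)
    (hnorm : Δ ≤ opNorm H)
    (F_T ε α : ℝ)
    (ρ : Matrix (Fin d) (Fin d) ℂ) (hρ : ρ.PosSemidef) (hρtr : ρ.trace = 1)
    {Ω : Type*} [MeasurableSpace Ω] (P : Measure Ω)
    (Fstar : Ω → ℝ)
    (hest : ENNReal.ofReal (1 - α) ≤
      P {ω | |Fstar ω - (1 - ((H * ρ).trace).re / Δ)| ≤ ε})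
    (hF : (star v ⬝ᵥ (ρ *ᵥ v)).re ≥
      F_T + ((1 - F_T) * (1 - Δ / opNorm H) + 2 * ε * Δ / opNorm H)) :
    ENNReal.ofReal (1 - α) ≤ P {ω | Fstar ω ≥ F_T + ε} := by
  have hFmin : F_T + 2 * ε ≤ 1 - ((H * ρ).trace).re / Δ :=
    add_two_mul_le_one_sub_div hΔ (hΔ.trans_le hnorm)
      (hH.isHermitian.re_trace_mul_le_norm_mul_one_sub hv hground hρ hρtr) hF
  refine hest.trans (measure_mono fun ω (hω : |Fstar ω - _| ≤ ε) => ?_)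
  show Fstar ω ≥ F_T + ε
  linarith [(abs_le.mp hω).1]

/-- Probabilistic completeness of the certification protocol. Under the
assumptions of Statement 7, if the random estimate `F*` of `F_min = 1 - Tr[Hρ]/Δ`
satisfies `P[|F* - F_min| ≤ ε] ≥ 1 - α`, and `F = ⟨v, ρ v⟩ ≥ F_T + δ`, then the test
accepts with probability at least `1 - α`: `P[F* ≥ F_T + ε] ≥ 1 - α`. -/
theorem certification_completeness_prob {d : ℕ} (H : Matrix (Fin d) (Fin d) ℂ)
    (hH : H.PosSemidef) (Δ : ℝ) (hΔ : 0 < Δ) (v : Fin d → ℂ)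
    (hv : star v ⬝ᵥ v = 1) (hground : H *ᵥ v = 0)
    (hgap : ∀ w : Fin d → ℂ, star v ⬝ᵥ w = 0 →
      Δ * (star w ⬝ᵥ w).re ≤ (star w ⬝ᵥ (H *ᵥ w)).re)
    (hnorm : Δ ≤ opNorm H)
    (F_T ε α : ℝ) (hFT : F_T < 1) (hε : 0 < ε) (hα : α ∈ Set.Ioo (0 : ℝ) 1)
    (ρ : Matrix (Fin d) (Fin d) ℂ) (hρ : ρ.PosSemidef) (hρtr : ρ.trace = 1)
    {Ω : Type*} [MeasurableSpace Ω] (P : Measure Ω) [IsProbabilityMeasure P]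
    (Fstar : Ω → ℝ)
    (hest : ENNReal.ofReal (1 - α) ≤
      P {ω | |Fstar ω - (1 - ((H * ρ).trace).re / Δ)| ≤ ε})
    (hF : (star v ⬝ᵥ (ρ *ᵥ v)).re ≥
      F_T + ((1 - F_T) * (1 - Δ / opNorm H) + 2 * ε * Δ / opNorm H)) :
    ENNReal.ofReal (1 - α) ≤ P {ω | Fstar ω ≥ F_T + ε} :=
  certification_completeness_prob_general H hH Δ hΔ v hv hground hnorm F_T ε α ρ hρ hρtr P Fstar
    hest hF
end

section
/- Let ρ₀ and ρ be density matrices on ℂ^d, let Π be a d×d complex matrix that is an orthogonal projection (Π = Π† and Π² = Π), and let a = Tr[Πρ₀] and b = Tr[Πρ]. Assume a ≥ c for some constant c > 0 and b > 0. Then the trace-norm distance between the post-measurement states satisfies ‖ Πρ₀Π/a − ΠρΠ/b ‖₁ ≤ (2/c) ‖ρ₀ − ρ‖₁, where ‖A‖₁ = Tr[√(A†A)] denotes the trace norm. -/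
open Matrix
open scoped ComplexOrder

/-- The positive semidefinite square root of a positive semidefinite matrix
(the definition Mathlib had in December 2024, since removed). -/
noncomputable def Matrix.PosSemidef.sqrt {n 𝕜 : Type*} [Fintype n] [DecidableEq n] [RCLike 𝕜]
    {A : Matrix n n 𝕜} (hA : A.PosSemidef) : Matrix n n 𝕜 :=
  (hA.1.eigenvectorUnitary : Matrix n n 𝕜) * diagonal ((RCLike.ofReal : ℝ → 𝕜) ∘ (√·) ∘ hA.1.eigenvalues) *
    (star hA.1.eigenvectorUnitary : Matrix n n 𝕜)

/-- The trace norm `‖A‖₁ = Tr √(A†A)` of a complex matrix. -/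
noncomputable def traceNorm {d : ℕ} (A : Matrix (Fin d) (Fin d) ℂ) : ℝ :=
  (((Matrix.posSemidef_conjTranspose_mul_self A).sqrt).trace).re

/-!
For Hermitian `A`, the trace norm `‖A‖₁ = ∑ |λᵢ|` is dual to the operator norm:
`|Re Tr (S A)| ≤ ‖S‖ ‖A‖₁`, with equality for `S = sign A`. Hence `‖·‖₁` is subadditive and
absolutely homogeneous on Hermitian matrices and does not increase under `A ↦ ΠAΠ`.
For `σ₀` Hermitian and `σ ≥ 0` with traces `a, b > 0`, the splitting
`σ₀/a - σ/b = (σ₀ - σ)/a + (1/a - 1/b) σ`, together with `‖σ‖₁ = b` and `|a - b| ≤ ‖σ₀ - σ‖₁`,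
gives `‖σ₀/a - σ/b‖₁ ≤ 2‖σ₀ - σ‖₁/a`. Apply this to `σ₀ = Πρ₀Π` and `σ = ΠρΠ`, whose traces are
`Tr Πρ₀` and `Tr Πρ`.
-/

namespace Matrix

variable {m n 𝕜 : Type*} [Fintype m] [Fintype n] [DecidableEq n] [RCLike 𝕜]

lemma PosSemidef.sqrt_eq_cfc {A : Matrix n n 𝕜} (hA : A.PosSemidef) :
    hA.sqrt = cfc Real.sqrt A := by
  rw [hA.1.cfc_eq]
  simp only [IsHermitian.cfc, PosSemidef.sqrt, Unitary.conjStarAlgAut_apply]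

lemma IsHermitian.sqrt_conjTranspose_mul_self {A : Matrix n n 𝕜} (hA : A.IsHermitian) :
    (posSemidef_conjTranspose_mul_self A).sqrt = cfc (fun x : ℝ => |x|) A := by
  rw [PosSemidef.sqrt_eq_cfc, hA.eq, ← sq, ← cfc_pow_id (R := ℝ) A 2 hA.isSelfAdjoint,
    ← cfc_comp' (R := ℝ) Real.sqrt (· ^ 2) A]
  simp only [Real.sqrt_sq_eq_abs]

lemma IsHermitian.trace_cfc {A : Matrix n n 𝕜} (hA : A.IsHermitian) (f : ℝ → ℝ) :
    (cfc f A).trace = ∑ i, (f (hA.eigenvalues i) : 𝕜) := by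
  rw [hA.cfc_eq, IsHermitian.cfc, Unitary.conjStarAlgAut_apply, trace_mul_cycle,
    Unitary.coe_star_mul_self, one_mul, trace_diagonal]
  rfl

open scoped Norms.L2Operator

lemma norm_apply_le_l2_opNorm (M : Matrix m n 𝕜) (i : m) (j : n) : ‖M i j‖ ≤ ‖M‖ := by
  have h := l2_opNorm_mulVec M (PiLp.single 2 j (1 : 𝕜))
  rw [PiLp.norm_single, norm_one, mul_one] at h
  refine le_trans (le_of_eq ?_) ((PiLp.norm_apply_le _ i).trans h)
  simp

end Matrix

section TraceNorm

open scoped Matrix.Norms.L2Operator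

variable {d : ℕ} {A B : Matrix (Fin d) (Fin d) ℂ}

lemma traceNorm_eq_re_trace_cfc_abs (hA : A.IsHermitian) :
    traceNorm A = (cfc (fun x : ℝ => |x|) A).trace.re := by
  rw [traceNorm, hA.sqrt_conjTranspose_mul_self]

lemma traceNorm_eq_sum_abs_eigenvalues (hA : A.IsHermitian) :
    traceNorm A = ∑ i, |hA.eigenvalues i| := by
  rw [traceNorm_eq_re_trace_cfc_abs hA, hA.trace_cfc, Complex.re_sum]
  simp

lemma traceNorm_nonneg (hA : A.IsHermitian) : 0 ≤ traceNorm A := by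
  rw [traceNorm_eq_sum_abs_eigenvalues hA]
  positivity

lemma traceNorm_of_posSemidef (hA : A.PosSemidef) : traceNorm A = A.trace.re := by
  rw [traceNorm_eq_sum_abs_eigenvalues hA.1, hA.1.trace_eq_sum_eigenvalues, Complex.re_sum]
  simp [abs_of_nonneg (hA.eigenvalues_nonneg _)]

lemma abs_re_trace_le_traceNorm (hA : A.IsHermitian) : |A.trace.re| ≤ traceNorm A := by
  rw [traceNorm_eq_sum_abs_eigenvalues hA, hA.trace_eq_sum_eigenvalues, Complex.re_sum]
  simpa using Finset.abs_sum_le_sum_abs _ _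

lemma abs_re_trace_mul_le_norm_mul_traceNorm (hA : A.IsHermitian) (P : Matrix (Fin d) (Fin d) ℂ) :
    |(P * A).trace.re| ≤ ‖P‖ * traceNorm A := by
  set U : Matrix (Fin d) (Fin d) ℂ := ↑hA.eigenvectorUnitary
  have htrace : (P * A).trace = ∑ i, (star U * P * U) i i * hA.eigenvalues i := by
    conv_lhs => rw [hA.spectral_theorem, Unitary.conjStarAlgAut_apply]
    rw [← mul_assoc, ← mul_assoc, trace_mul_cycle, ← mul_assoc]
    simp [trace, mul_diagonal, U]
  have hentry (i : Fin d) : ‖(star U * P * U) i i‖ ≤ ‖P‖ := by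
    refine (norm_apply_le_l2_opNorm _ i i).trans (le_of_eq ?_)
    rw [CStarRing.norm_mul_coe_unitary, ← Unitary.coe_star, CStarRing.norm_coe_unitary_mul]
  rw [htrace, Complex.re_sum, traceNorm_eq_sum_abs_eigenvalues hA, Finset.mul_sum]
  refine (Finset.abs_sum_le_sum_abs _ _).trans (Finset.sum_le_sum fun i _ => ?_)
  calc |((star U * P * U) i i * hA.eigenvalues i).re|
      ≤ ‖(star U * P * U) i i * hA.eigenvalues i‖ := Complex.abs_re_le_norm _
    _ = ‖(star U * P * U) i i‖ * |hA.eigenvalues i| := by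
        rw [norm_mul, Complex.norm_real, Real.norm_eq_abs]
    _ ≤ ‖P‖ * |hA.eigenvalues i| := by gcongr; exact hentry i

lemma abs_re_trace_mul_le_traceNorm (hA : A.IsHermitian) {S : Matrix (Fin d) (Fin d) ℂ}
    (hS : ‖S‖ ≤ 1) : |(S * A).trace.re| ≤ traceNorm A :=
  (abs_re_trace_mul_le_norm_mul_traceNorm hA S).trans (mul_le_of_le_one_left (traceNorm_nonneg hA) hS)

lemma exists_norm_le_one_re_trace_mul_eq_traceNorm (hA : A.IsHermitian) :
    ∃ S : Matrix (Fin d) (Fin d) ℂ, ‖S‖ ≤ 1 ∧ (S * A).trace.re = traceNorm A := by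
  have hcont {f : ℝ → ℝ} : ContinuousOn f (spectrum ℝ A) := finite_real_spectrum.continuousOn f
  refine ⟨cfc (fun x : ℝ => (SignType.sign x : ℝ)) A, norm_cfc_le zero_le_one fun x _ => ?_, ?_⟩
  · rcases lt_trichotomy x 0 with h | h | h <;> simp [h]
  · rw [traceNorm_eq_re_trace_cfc_abs hA]
    have hmul := cfc_mul (fun x : ℝ => (SignType.sign x : ℝ)) (fun x => x) A hcont hcont
    rw [cfc_id' ℝ A] at hmul
    simp only [← hmul, sign_mul_self]

lemma traceNorm_le_of_forall_re_trace_mul_le (hA : A.IsHermitian) {C : ℝ}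
    (h : ∀ S : Matrix (Fin d) (Fin d) ℂ, ‖S‖ ≤ 1 → (S * A).trace.re ≤ C) : traceNorm A ≤ C := by
  obtain ⟨S, hS, hSA⟩ := exists_norm_le_one_re_trace_mul_eq_traceNorm hA
  exact hSA ▸ h S hS

lemma traceNorm_smul_add_smul_le (hA : A.IsHermitian) (hB : B.IsHermitian) (r s : ℝ) :
    traceNorm (r • A + s • B) ≤ |r| * traceNorm A + |s| * traceNorm B := by
  have hr : (r • A).IsHermitian := hA.smul (IsSelfAdjoint.all r)
  have hs : (s • B).IsHermitian := hB.smul (IsSelfAdjoint.all s)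
  have hbound {M S : Matrix (Fin d) (Fin d) ℂ} (hM : M.IsHermitian) (hS : ‖S‖ ≤ 1) (t : ℝ) :
      t * (S * M).trace.re ≤ |t| * traceNorm M := by
    refine (le_abs_self _).trans ?_
    rw [abs_mul]
    gcongr
    exact abs_re_trace_mul_le_traceNorm hM hS
  refine traceNorm_le_of_forall_re_trace_mul_le (hr.add hs) fun S hS => ?_
  rw [mul_add, mul_smul_comm, mul_smul_comm, trace_add, trace_smul, trace_smul, Complex.add_re,
    Complex.smul_re, Complex.smul_re, smul_eq_mul, smul_eq_mul]
  exact add_le_add (hbound hA hS r) (hbound hB hS s)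

lemma traceNorm_inv_smul_sub_inv_smul_le (hA : A.IsHermitian) (hB : B.PosSemidef)
    (hA0 : 0 < A.trace.re) (hB0 : 0 < B.trace.re) :
    traceNorm (A.trace.re⁻¹ • A - B.trace.re⁻¹ • B) ≤ 2 / A.trace.re * traceNorm (A - B) := by
  set a := A.trace.re
  set b := B.trace.re
  have hAB : (A - B).IsHermitian := hA.sub hB.1
  have hsplit : a⁻¹ • A - b⁻¹ • B = a⁻¹ • (A - B) + (a⁻¹ - b⁻¹) • B := by
    rw [smul_sub, sub_smul]
    abel
  have hab : |a - b| ≤ traceNorm (A - B) := by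
    simpa only [trace_sub, Complex.sub_re] using abs_re_trace_le_traceNorm hAB
  have hcoef : |a⁻¹ - b⁻¹| * b = |a - b| / a := by
    rw [inv_sub_inv hA0.ne' hB0.ne', abs_div, abs_of_pos (mul_pos hA0 hB0), abs_sub_comm]
    field_simp
  calc traceNorm (a⁻¹ • A - b⁻¹ • B)
      ≤ |a⁻¹| * traceNorm (A - B) + |a⁻¹ - b⁻¹| * traceNorm B :=
        hsplit ▸ traceNorm_smul_add_smul_le hAB hB.1 _ _
    _ = (traceNorm (A - B) + |a - b|) / a := by
        rw [abs_of_pos (inv_pos.mpr hA0), traceNorm_of_posSemidef hB, hcoef, add_div,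
          inv_mul_eq_div]
    _ ≤ 2 / a * traceNorm (A - B) := by
        rw [div_mul_eq_mul_div]
        gcongr
        linarith

variable {P : Matrix (Fin d) (Fin d) ℂ}

lemma traceNorm_mul_mul_le_of_isStarProjection (hA : A.IsHermitian) (hP : IsStarProjection P) :
    traceNorm (P * A * P) ≤ traceNorm A := by
  have hPA : (P * A * P).IsHermitian := by
    simpa only [show Pᴴ = P from hP.isSelfAdjoint] using isHermitian_mul_mul_conjTranspose P hA
  refine traceNorm_le_of_forall_re_trace_mul_le hPA fun S hS => ?_
  have hPSP : ‖P * S * P‖ ≤ 1 :=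
    calc ‖P * S * P‖ ≤ ‖P‖ * ‖S‖ * ‖P‖ := norm_mul₃_le
      _ ≤ 1 * 1 * 1 := by gcongr <;> exact hP.norm_le
      _ = 1 := by norm_num
  have hcycle : (S * (P * A * P)).trace = (P * S * P * A).trace := by
    rw [← mul_assoc, trace_mul_cycle, ← mul_assoc]
  rw [hcycle]
  exact (le_abs_self _).trans (abs_re_trace_mul_le_traceNorm hA hPSP)

end TraceNorm

theorem post_measurement_trace_distance_general {d : ℕ}
    (ρ₀ ρ Pi : Matrix (Fin d) (Fin d) ℂ)
    (hρ₀ : ρ₀.PosSemidef)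
    (hρ : ρ.PosSemidef)
    (hPiH : Pi.IsHermitian) (hPi : Pi * Pi = Pi)
    (c : ℝ) (hc : 0 < c)
    (a b : ℝ) (ha : a = ((Pi * ρ₀).trace).re) (hb : b = ((Pi * ρ).trace).re)
    (hac : c ≤ a) (hbpos : 0 < b) :
    traceNorm (a⁻¹ • (Pi * ρ₀ * Pi) - b⁻¹ • (Pi * ρ * Pi)) ≤
      (2 / c) * traceNorm (ρ₀ - ρ) := by
  have ha0 : 0 < a := hc.trans_le hac
  have hproj : IsStarProjection Pi := ⟨hPi, hPiH⟩
  have hΔ : (ρ₀ - ρ).IsHermitian := hρ₀.1.sub hρ.1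
  have hcompress {σ : Matrix (Fin d) (Fin d) ℂ} (hσ : σ.PosSemidef) : (Pi * σ * Pi).PosSemidef := by
    simpa only [hPiH.eq] using hσ.mul_mul_conjTranspose_same Pi
  have htrace (σ : Matrix (Fin d) (Fin d) ℂ) : (Pi * σ * Pi).trace.re = (Pi * σ).trace.re := by
    rw [trace_mul_comm, ← mul_assoc, hPi]
  have hnormalize := traceNorm_inv_smul_sub_inv_smul_le (hcompress hρ₀).1 (hcompress hρ)
    (by rwa [htrace, ← ha]) (by rwa [htrace, ← hb])
  rw [htrace, htrace, ← ha, ← hb, ← sub_mul, ← mul_sub] at hnormalize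
  calc traceNorm (a⁻¹ • (Pi * ρ₀ * Pi) - b⁻¹ • (Pi * ρ * Pi))
      ≤ 2 / a * traceNorm (Pi * (ρ₀ - ρ) * Pi) := hnormalize
    _ ≤ 2 / a * traceNorm (ρ₀ - ρ) :=
        mul_le_mul_of_nonneg_left (traceNorm_mul_mul_le_of_isStarProjection hΔ hproj)
          (div_nonneg zero_le_two ha0.le)
    _ ≤ 2 / c * traceNorm (ρ₀ - ρ) :=
        mul_le_mul_of_nonneg_right (div_le_div_of_nonneg_left zero_le_two hc hac)
          (traceNorm_nonneg hΔ)

/-- Stability of post-measurement states. For density matrices `ρ₀, ρ`,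
an orthogonal projection `Π`, and `a = Tr[Πρ₀] ≥ c > 0`, `b = Tr[Πρ] > 0`, the
post-measurement states satisfy `‖Πρ₀Π/a - ΠρΠ/b‖₁ ≤ (2/c)‖ρ₀ - ρ‖₁`. -/
theorem post_measurement_trace_distance {d : ℕ}
    (ρ₀ ρ Pi : Matrix (Fin d) (Fin d) ℂ)
    (hρ₀ : ρ₀.PosSemidef) (hρ₀tr : ρ₀.trace = 1)
    (hρ : ρ.PosSemidef) (hρtr : ρ.trace = 1)
    (hPiH : Pi.IsHermitian) (hPi : Pi * Pi = Pi)
    (c : ℝ) (hc : 0 < c)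
    (a b : ℝ) (ha : a = ((Pi * ρ₀).trace).re) (hb : b = ((Pi * ρ).trace).re)
    (hac : c ≤ a) (hbpos : 0 < b) :
    traceNorm (a⁻¹ • (Pi * ρ₀ * Pi) - b⁻¹ • (Pi * ρ * Pi)) ≤
      (2 / c) * traceNorm (ρ₀ - ρ) :=
  post_measurement_trace_distance_general ρ₀ ρ Pi hρ₀ hρ hPiH hPi c hc a b ha hb hac hbpos
end
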